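/- Under the same data, the Darboux formula r⁽¹⁾ = 2iψ₁ψ₂(λ₁-λ₂)/(ψ₂φ₁ - ψ₁φ₂) simplifies to r⁽¹⁾ = i(λ₁-λ₂)·e^{i(λ₁+λ₂)X/(2λ₁λ₂) + i(λ₁+λ₂)T}·sech( i(λ₁-λ₂)X/(2λ₁λ₂) - i(λ₁-λ₂)T ), and consequently q⁽¹⁾(X,T)·r⁽¹⁾(X,T) = (λ₁-λ₂)²·sech²( i(λ₁-λ₂)X/(2λ₁λ₂) - i(λ₁-λ₂)T ). -/

import Mathlib

open Complex

noncomputable def csech (z : ℂ) : ℂ := 2 / (Complex.exp z + Complex.exp (-z))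

/-!
With the phase `θ(λ) = iX/(2λ) + iλT` we have `ψ₁ = e^{θ₁}`, `φ₁ = e^{-θ₁}`, `ψ₂ = -e^{θ₂}`,
`φ₂ = e^{-θ₂}`, so the Darboux denominator is `-(e^z + e^{-z}) = -2 / sech z` with `z = θ₂ - θ₁`,
while `ψ₁ψ₂ = -e^{θ₁+θ₂}` and `φ₁φ₂ = e^{-(θ₁+θ₂)}`. Hence `r = i(λ₁-λ₂) e^{θ₁+θ₂} sech z` and
`q = -i(λ₁-λ₂) e^{-(θ₁+θ₂)} sech z`, whose product is `(λ₁-λ₂)² sech² z`.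
-/

noncomputable def phase (lam : ℂ) (X T : ℝ) : ℂ := I * X / (2 * lam) + I * lam * T

section Phase

variable {lam₁ lam₂ : ℂ} (X T : ℝ)

theorem neg_phase (lam : ℂ) : -phase lam X T = -(I * X) / (2 * lam) - I * lam * T := by
  unfold phase; ring

theorem phase_sub_phase (h1 : lam₁ ≠ 0) (h2 : lam₂ ≠ 0) :
    phase lam₂ X T - phase lam₁ X T
      = I * (lam₁ - lam₂) * X / (2 * lam₁ * lam₂) - I * (lam₁ - lam₂) * T := by
  unfold phase; field_simp; ring

theorem phase_add_phase (h1 : lam₁ ≠ 0) (h2 : lam₂ ≠ 0) :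
    phase lam₁ X T + phase lam₂ X T
      = I * (lam₁ + lam₂) * X / (2 * lam₁ * lam₂) + I * (lam₁ + lam₂) * T := by
  unfold phase; field_simp; ring

end Phase

section Darboux

variable {θ₁ θ₂ φ₁ ψ₁ φ₂ ψ₂ : ℂ}

theorem two_div_darboux_denom (hφ₁ : φ₁ = exp (-θ₁)) (hψ₁ : ψ₁ = exp θ₁)
    (hφ₂ : φ₂ = exp (-θ₂)) (hψ₂ : ψ₂ = -exp θ₂) :
    2 / (ψ₂ * φ₁ - ψ₁ * φ₂) = -csech (θ₂ - θ₁) := by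
  have hden : ψ₂ * φ₁ - ψ₁ * φ₂ = -(exp (θ₂ - θ₁) + exp (-(θ₂ - θ₁))) := by
    rw [hφ₁, hψ₁, hφ₂, hψ₂, neg_sub, sub_eq_add_neg θ₂, sub_eq_add_neg θ₁, exp_add, exp_add]
    ring
  rw [hden, div_neg, csech]

theorem darboux_r_eq (c : ℂ) (hφ₁ : φ₁ = exp (-θ₁)) (hψ₁ : ψ₁ = exp θ₁)
    (hφ₂ : φ₂ = exp (-θ₂)) (hψ₂ : ψ₂ = -exp θ₂) :
    2 * I * ψ₁ * ψ₂ * c / (ψ₂ * φ₁ - ψ₁ * φ₂) = I * c * exp (θ₁ + θ₂) * csech (θ₂ - θ₁) := by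
  calc 2 * I * ψ₁ * ψ₂ * c / (ψ₂ * φ₁ - ψ₁ * φ₂)
      = I * c * (ψ₁ * ψ₂) * (2 / (ψ₂ * φ₁ - ψ₁ * φ₂)) := by ring
    _ = I * c * exp (θ₁ + θ₂) * csech (θ₂ - θ₁) := by
      rw [two_div_darboux_denom hφ₁ hψ₁ hφ₂ hψ₂, hψ₁, hψ₂, exp_add]; ring

theorem darboux_q_eq (c : ℂ) (hφ₁ : φ₁ = exp (-θ₁)) (hψ₁ : ψ₁ = exp θ₁)
    (hφ₂ : φ₂ = exp (-θ₂)) (hψ₂ : ψ₂ = -exp θ₂) :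
    2 * I * φ₁ * φ₂ * c / (ψ₂ * φ₁ - ψ₁ * φ₂) = -I * c * exp (-(θ₁ + θ₂)) * csech (θ₂ - θ₁) := by
  calc 2 * I * φ₁ * φ₂ * c / (ψ₂ * φ₁ - ψ₁ * φ₂)
      = I * c * (φ₁ * φ₂) * (2 / (ψ₂ * φ₁ - ψ₁ * φ₂)) := by ring
    _ = -I * c * exp (-(θ₁ + θ₂)) * csech (θ₂ - θ₁) := by
      rw [two_div_darboux_denom hφ₁ hψ₁ hφ₂ hψ₂, hφ₁, hφ₂, neg_add, exp_add]; ring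

theorem darboux_q_mul_r (c : ℂ) (hφ₁ : φ₁ = exp (-θ₁)) (hψ₁ : ψ₁ = exp θ₁)
    (hφ₂ : φ₂ = exp (-θ₂)) (hψ₂ : ψ₂ = -exp θ₂) :
    (2 * I * φ₁ * φ₂ * c / (ψ₂ * φ₁ - ψ₁ * φ₂)) * (2 * I * ψ₁ * ψ₂ * c / (ψ₂ * φ₁ - ψ₁ * φ₂))
      = c ^ 2 * csech (θ₂ - θ₁) ^ 2 := by
  have hexp : exp (-(θ₁ + θ₂)) * exp (θ₁ + θ₂) = 1 := by rw [← exp_add, neg_add_cancel, exp_zero]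
  rw [darboux_q_eq c hφ₁ hψ₁ hφ₂ hψ₂, darboux_r_eq c hφ₁ hψ₁ hφ₂ hψ₂]
  linear_combination (-I ^ 2 * c ^ 2 * csech (θ₂ - θ₁) ^ 2) * hexp - c ^ 2 * csech (θ₂ - θ₁) ^ 2 * I_sq

end Darboux

theorem one_soliton_r_and_product_general (lam₁ lam₂ : ℂ) (h1 : lam₁ ≠ 0) (h2 : lam₂ ≠ 0)
    (X T : ℝ)
    (φ₁ ψ₁ φ₂ ψ₂ : ℂ)
    (hφ₁ : φ₁ = Complex.exp (-(I * X) / (2 * lam₁) - I * lam₁ * T))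
    (hψ₁ : ψ₁ = Complex.exp ((I * X) / (2 * lam₁) + I * lam₁ * T))
    (hφ₂ : φ₂ = Complex.exp (-(I * X) / (2 * lam₂) - I * lam₂ * T))
    (hψ₂ : ψ₂ = -Complex.exp ((I * X) / (2 * lam₂) + I * lam₂ * T)) :
    (2 * I * ψ₁ * ψ₂ * (lam₁ - lam₂) / (ψ₂ * φ₁ - ψ₁ * φ₂)
      = I * (lam₁ - lam₂)
        * Complex.exp ((I * (lam₁ + lam₂) * X) / (2 * lam₁ * lam₂) + I * (lam₁ + lam₂) * T)
        * csech (I * (lam₁ - lam₂) * X / (2 * lam₁ * lam₂) - I * (lam₁ - lam₂) * T)) ∧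
    ((2 * I * φ₁ * φ₂ * (lam₁ - lam₂) / (ψ₂ * φ₁ - ψ₁ * φ₂))
        * (2 * I * ψ₁ * ψ₂ * (lam₁ - lam₂) / (ψ₂ * φ₁ - ψ₁ * φ₂))
      = (lam₁ - lam₂) ^ 2
        * (csech (I * (lam₁ - lam₂) * X / (2 * lam₁ * lam₂) - I * (lam₁ - lam₂) * T)) ^ 2) := by
  rw [← neg_phase] at hφ₁ hφ₂
  rw [← phase_sub_phase X T h1 h2, ← phase_add_phase X T h1 h2]
  exact ⟨darboux_r_eq _ hφ₁ hψ₁ hφ₂ hψ₂, darboux_q_mul_r _ hφ₁ hψ₁ hφ₂ hψ₂⟩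

theorem one_soliton_r_and_product (lam₁ lam₂ : ℂ) (h1 : lam₁ ≠ 0) (h2 : lam₂ ≠ 0)
    (hne : lam₁ ≠ lam₂) (X T : ℝ)
    (φ₁ ψ₁ φ₂ ψ₂ : ℂ)
    (hφ₁ : φ₁ = Complex.exp (-(I * X) / (2 * lam₁) - I * lam₁ * T))
    (hψ₁ : ψ₁ = Complex.exp ((I * X) / (2 * lam₁) + I * lam₁ * T))
    (hφ₂ : φ₂ = Complex.exp (-(I * X) / (2 * lam₂) - I * lam₂ * T))
    (hψ₂ : ψ₂ = -Complex.exp ((I * X) / (2 * lam₂) + I * lam₂ * T))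
    (hden : ψ₂ * φ₁ - ψ₁ * φ₂ ≠ 0)
    (hsech : Complex.exp (I * (lam₁ - lam₂) * X / (2 * lam₁ * lam₂) - I * (lam₁ - lam₂) * T)
      + Complex.exp (-(I * (lam₁ - lam₂) * X / (2 * lam₁ * lam₂) - I * (lam₁ - lam₂) * T)) ≠ 0) :
    (2 * I * ψ₁ * ψ₂ * (lam₁ - lam₂) / (ψ₂ * φ₁ - ψ₁ * φ₂)
      = I * (lam₁ - lam₂)
        * Complex.exp ((I * (lam₁ + lam₂) * X) / (2 * lam₁ * lam₂) + I * (lam₁ + lam₂) * T)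
        * csech (I * (lam₁ - lam₂) * X / (2 * lam₁ * lam₂) - I * (lam₁ - lam₂) * T)) ∧
    ((2 * I * φ₁ * φ₂ * (lam₁ - lam₂) / (ψ₂ * φ₁ - ψ₁ * φ₂))
        * (2 * I * ψ₁ * ψ₂ * (lam₁ - lam₂) / (ψ₂ * φ₁ - ψ₁ * φ₂))
      = (lam₁ - lam₂) ^ 2
        * (csech (I * (lam₁ - lam₂) * X / (2 * lam₁ * lam₂) - I * (lam₁ - lam₂) * T)) ^ 2) :=
  one_soliton_r_and_product_general lam₁ lam₂ h1 h2 X T φ₁ ψ₁ φ₂ ψ₂ hφ₁ hψ₁ hφ₂ hψ₂
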